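/- arXiv:2409.05812 — 2 statements merged into one kernel-verified Lean document; each statement's English description precedes it below -/
import Mathlib

section
/- Let E, A ∈ ℝ^{m×n}, C ∈ ℝ^{r×n}, K ∈ ℝ^{p×n}. There exist matrices N ∈ ℝ^{p×p}, T ∈ ℝ^{p×m}, L ∈ ℝ^{p×r}, M ∈ ℝ^{p×r} satisfying the two matrix equations T·A − L·C − N·(T·E) = 0 and T·E + M·C = K if and only if the rank of the block matrix with block rows [E A], [C 0], [0 C], [0 K], [K 0] equals the rank of the block matrix with block rows [E A], [C 0], [0 C], [0 K]. -/
/-!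
Substituting `T * E = K - M * C` turns the first equation into
`T * A + (N * M - L) * C - N * K = 0`, which is linear in the new unknowns `N * M - L` and `-N`.
So the system is solvable iff the single linear equation
`X * [[E, A], [C, 0], [0, C], [0, K]] = [K, 0]` has a solution `X = [T, M, N * M - L, -N]`,
and `X * B = D` is solvable iff the rows of `D` lie in the row space of `B`, i.e. iff appending
them to `B` does not raise the rank.
-/

open Matrix Submodule

namespace Matrix

variable {K ι κ ν : Type*} [Field K]

theorem span_row_fromRows (B : Matrix ι ν K) (D : Matrix κ ν K) :
    span K (Set.range (fromRows B D).row) = span K (Set.range B.row) ⊔ span K (Set.range D.row) :=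
  (congrArg (span K) (Set.Sum.elim_range B D)).trans (span_union _ _)

theorem exists_mul_eq_iff_span_row_le [Fintype ι] (B : Matrix ι ν K) (D : Matrix κ ν K) :
    (∃ X : Matrix κ ι K, X * B = D) ↔ span K (Set.range D.row) ≤ span K (Set.range B.row) := by
  simp only [span_le, Set.range_subset_iff, SetLike.mem_coe, ← range_vecMulLinear,
    LinearMap.mem_range, vecMulLinear_apply, Classical.skolem]
  exact ⟨fun ⟨X, hX⟩ => ⟨X, fun i => by rw [← mul_apply_eq_vecMul, hX]; rfl⟩,
    fun ⟨X, hX⟩ => ⟨of X, funext fun i => by rw [mul_apply_eq_vecMul]; exact hX i⟩⟩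

theorem exists_mul_eq_iff_rank_fromRows [Fintype ι] [Finite κ] [Fintype ν] (B : Matrix ι ν K)
    (D : Matrix κ ν K) :
    (∃ X : Matrix κ ι K, X * B = D) ↔ (fromRows B D).rank = B.rank := by
  rw [exists_mul_eq_iff_span_row_le, rank_eq_finrank_span_row, rank_eq_finrank_span_row,
    span_row_fromRows, ← sup_eq_left]
  exact ⟨fun h => by rw [h], fun h => (eq_of_le_of_finrank_eq le_sup_left h.symm).symm⟩

theorem exists_fromCols_iff {R m n₁ n₂ : Type*} {P : Matrix m (n₁ ⊕ n₂) R → Prop} :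
    (∃ X, P X) ↔ ∃ X₁ X₂, P (fromCols X₁ X₂) :=
  ⟨fun ⟨X, hX⟩ => ⟨X.toCols₁, X.toCols₂, by rwa [fromCols_toCols]⟩, fun ⟨_, _, h⟩ => ⟨_, h⟩⟩

theorem fromCols_add_fromCols {R m n₁ n₂ : Type*} [Add R] (A₁ B₁ : Matrix m n₁ R)
    (A₂ B₂ : Matrix m n₂ R) : fromCols A₁ A₂ + fromCols B₁ B₂ = fromCols (A₁ + B₁) (A₂ + B₂) := by
  ext i (j | j) <;> rfl

end Matrix

section FilterEquations

variable {R μ ρ π ν : Type*} [Ring R] [Fintype μ] [Fintype ρ] [Fintype π]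
  {E A : Matrix μ ν R} {C : Matrix ρ ν R} {K : Matrix π ν R}

theorem exists_filter_equations_iff :
    (∃ (N : Matrix π π R) (T : Matrix π μ R) (L M : Matrix π ρ R),
        T * A - L * C - N * (T * E) = 0 ∧ T * E + M * C = K) ↔
      ∃ (T : Matrix π μ R) (M L' : Matrix π ρ R) (N' : Matrix π π R),
        T * E + M * C = K ∧ T * A + L' * C + N' * K = 0 := by
  constructor
  · rintro ⟨N, T, L, M, h₁, h₂⟩
    refine ⟨T, M, N * M - L, -N, h₂, ?_⟩
    rw [← h₁, ← h₂]
    simp only [Matrix.mul_add, Matrix.sub_mul, Matrix.neg_mul, Matrix.mul_assoc]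
    abel
  · rintro ⟨T, M, L', N', h₂, h₁⟩
    refine ⟨-N', T, -N' * M - L', M, ?_, h₂⟩
    rw [← h₁, ← h₂]
    simp only [Matrix.mul_add, Matrix.sub_mul, Matrix.neg_mul, Matrix.mul_assoc]
    abel

end FilterEquations

/-- The matrix equations `T·A − L·C − N·(T·E) = 0` and `T·E + M·C = K` are solvable
for `(N, T, L, M)` if and only if the rank of the block matrix with block rows
`[E A], [C 0], [0 C], [0 K], [K 0]` equals the rank of the block matrix with block
rows `[E A], [C 0], [0 C], [0 K]`. -/
theorem filter_equations_solvable_iff_rank (m n r p : ℕ)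
    (E A : Matrix (Fin m) (Fin n) ℝ) (C : Matrix (Fin r) (Fin n) ℝ)
    (K : Matrix (Fin p) (Fin n) ℝ) :
    (∃ (N : Matrix (Fin p) (Fin p) ℝ) (T : Matrix (Fin p) (Fin m) ℝ)
        (L : Matrix (Fin p) (Fin r) ℝ) (M : Matrix (Fin p) (Fin r) ℝ),
        T * A - L * C - N * (T * E) = 0 ∧ T * E + M * C = K) ↔
      (Matrix.fromRows
          (Matrix.fromRows
            (Matrix.fromRows
              (Matrix.fromRows (Matrix.fromCols E A) (Matrix.fromCols C 0))
              (Matrix.fromCols 0 C))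
            (Matrix.fromCols 0 K))
          (Matrix.fromCols K 0)).rank =
        (Matrix.fromRows
          (Matrix.fromRows
            (Matrix.fromRows (Matrix.fromCols E A) (Matrix.fromCols C 0))
            (Matrix.fromCols 0 C))
          (Matrix.fromCols 0 K)).rank := by
  rw [← exists_mul_eq_iff_rank_fromRows, exists_filter_equations_iff]
  simp only [exists_fromCols_iff, fromCols_mul_fromRows, mul_fromCols, fromCols_add_fromCols,
    fromCols_ext_iff, Matrix.mul_zero, add_zero]
end

section
/- Let Q ∈ ℝ^{p×p} be symmetric positive definite, N ∈ ℝ^{p×p}, S ∈ ℝ^{p×l}, ℬ ∈ ℝ^{p×q}, H ∈ ℝ^{l×p}, H̃ ∈ ℝ^{p×q}, ρ ∈ ℝ, γ > 0. Set ℋ := Hᵀ·H and let Π̃ be the symmetric (p+l+q)×(p+l+q) block matrix with blocks Π̃₁₁ = Nᵀ·Q + Q·N − ρ·ℋ + Iₚ, Π̃₁₂ = Q·S + Hᵀ, Π̃₁₃ = Q·ℬ + ρ·ℋ·H̃ − H̃, Π̃₂₂ = 0, Π̃₂₃ = −H·H̃, Π̃₃₃ = −ρ·H̃ᵀ·ℋ·H̃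 + H̃ᵀ·H̃ − γ²·I_q, and Π̃ⱼᵢ = Π̃ᵢⱼᵀ, and assume −Π̃ is positive semidefinite. Let v : ℝ → ℝ^q and Δg : ℝ → ℝˡ be continuous, and let e₁ : ℝ → ℝᵖ be differentiable with ė₁(t) = N·e₁(t) + S·Δg(t) + ℬ·v(t) for all t ≥ 0. Define e(t) := e₁(t) − H̃·v(t) and assume the sector condition 2·⟨H·e(t), Δg(t)⟩ ≥ ρ·‖H·e(t)‖² for all t ≥ 0. Then for every t_f > 0, ∫₀^{t_f} ‖e(t)‖² dt ≤ ⟨e₁(0), Q·e₁(0)⟩ + γ²·∫₀^{t_f} ‖v(t)‖² dt. -/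
/-!
`V(x) = ⟨x, Q x⟩` is a storage function for the error dynamics. The quadratic form of `Π̃` at
`(e₁, Δg, v)` equals `V̇ + ‖e‖² - γ² ‖v‖² + (2 ⟨H e, Δg⟩ - ρ ‖H e‖²)`, so `-Π̃ ⪰ 0` together
with the sector condition gives the dissipation inequality `V̇ ≤ γ² ‖v‖² - ‖e‖²`. Integrating
it over `[0, t_f]` and dropping `V(e₁ t_f) ≥ 0` yields the bound.
-/

open Matrix

section
variable {m n R : Type*} [Fintype m] [Fintype n] [CommRing R]

theorem sumElim_dotProduct_fromBlocks_transpose_mulVec (A : Matrix m m R) (B : Matrix m n R)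
    (D : Matrix n n R) (x : m → R) (y : n → R) :
    (x ⊕ᵥ y) ⬝ᵥ (fromBlocks A B Bᵀ D *ᵥ (x ⊕ᵥ y)) =
      x ⬝ᵥ A *ᵥ x + 2 * (x ⬝ᵥ B *ᵥ y) + y ⬝ᵥ D *ᵥ y := by
  rw [fromBlocks_mulVec, Sum.elim_comp_inl, Sum.elim_comp_inr, sumElim_dotProduct_sumElim,
    dotProduct_add, dotProduct_add, dotProduct_transpose_mulVec]
  ring
end

section
variable {𝕜 n : Type*} [NontriviallyNormedField 𝕜] [Fintype n] {x y : 𝕜 → n → 𝕜} {x' y' : n → 𝕜}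
  {t : 𝕜}

theorem HasDerivAt.dotProduct (hx : HasDerivAt x x' t) (hy : HasDerivAt y y' t) :
    HasDerivAt (fun s => x s ⬝ᵥ y s) (x' ⬝ᵥ y t + x t ⬝ᵥ y') t :=
  (HasDerivAt.fun_sum (u := Finset.univ) fun i _ =>
    (hasDerivAt_pi.1 hx i).fun_mul (hasDerivAt_pi.1 hy i)).congr_deriv
    (by rw [Finset.sum_add_distrib]; rfl)

theorem HasDerivAt.matrix_mulVec {m : Type*} (M : Matrix m n 𝕜) (hx : HasDerivAt x x' t) :
    HasDerivAt (fun s => M *ᵥ x s) (M *ᵥ x') t :=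
  hasDerivAt_pi.2 fun i => by simpa [mulVec] using (hasDerivAt_const t (M i)).dotProduct hx

end

open Set in
theorem integral_le_add_integral_of_hasDerivAt_le_sub {V V' f g : ℝ → ℝ} {a b : ℝ} (hab : a ≤ b)
    (hV : ∀ t ∈ Icc a b, HasDerivAt V (V' t) t) (hVb : 0 ≤ V b)
    (hf : ContinuousOn f (Icc a b)) (hg : ContinuousOn g (Icc a b))
    (hdiss : ∀ t ∈ Ioo a b, V' t ≤ g t - f t) :
    ∫ t in a..b, f t ≤ V a + ∫ t in a..b, g t := by
  have hV_sub := intervalIntegral.sub_le_integral_of_hasDeriv_right_of_le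
    (φ := fun t => g t - f t) hab (fun t ht => (hV t ht).continuousAt.continuousWithinAt)
    (fun t ht => (hV t (Ioo_subset_Icc_self ht)).hasDerivWithinAt)
    (hg.sub hf).integrableOn_Icc hdiss
  rw [intervalIntegral.integral_sub (hg.intervalIntegrable_of_Icc hab)
    (hf.intervalIntegrable_of_Icc hab)] at hV_sub
  linarith

variable {m k n : Type*} [Fintype m] [Fintype k] [Fintype n] [DecidableEq m] [DecidableEq n]

/-- `Π̃` of the paper, with `ℋ = Hᵀ H` inlined. -/
def hinfLMI (Q N : Matrix m m ℝ) (S : Matrix m k ℝ) (B : Matrix m n ℝ) (H : Matrix k m ℝ)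
    (Htil : Matrix m n ℝ) (ρ γ : ℝ) : Matrix (m ⊕ (k ⊕ n)) (m ⊕ (k ⊕ n)) ℝ :=
  fromBlocks (Nᵀ * Q + Q * N - ρ • (Hᵀ * H) + 1)
    (fromCols (Q * S + Hᵀ) (Q * B + ρ • (Hᵀ * H * Htil) - Htil))
    (fromRows (Q * S + Hᵀ)ᵀ (Q * B + ρ • (Hᵀ * H * Htil) - Htil)ᵀ)
    (fromBlocks 0 (-(H * Htil)) (-(H * Htil))ᵀ
      (-(ρ • (Htilᵀ * (Hᵀ * H) * Htil)) + Htilᵀ * Htil - γ ^ 2 • (1 : Matrix n n ℝ)))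

theorem dotProduct_hinfLMI_mulVec {Q N : Matrix m m ℝ} (hQ : Qᵀ = Q) (S : Matrix m k ℝ)
    (B : Matrix m n ℝ) (H : Matrix k m ℝ) (Htil : Matrix m n ℝ) (ρ γ : ℝ)
    (x : m → ℝ) (w : k → ℝ) (u : n → ℝ) :
    (x ⊕ᵥ (w ⊕ᵥ u)) ⬝ᵥ (hinfLMI Q N S B H Htil ρ γ *ᵥ (x ⊕ᵥ (w ⊕ᵥ u))) =
      (N *ᵥ x + S *ᵥ w + B *ᵥ u) ⬝ᵥ Q *ᵥ x + x ⬝ᵥ Q *ᵥ (N *ᵥ x + S *ᵥ w + B *ᵥ u)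
        + (x - Htil *ᵥ u) ⬝ᵥ (x - Htil *ᵥ u) - γ ^ 2 * (u ⬝ᵥ u)
        + (2 * (H *ᵥ (x - Htil *ᵥ u) ⬝ᵥ w)
          - ρ * (H *ᵥ (x - Htil *ᵥ u) ⬝ᵥ H *ᵥ (x - Htil *ᵥ u))) := by
  rw [hinfLMI, ← transpose_fromCols, sumElim_dotProduct_fromBlocks_transpose_mulVec,
    sumElim_dotProduct_fromBlocks_transpose_mulVec, fromCols_mulVec_sumElim]
  simp only [add_mulVec, sub_mulVec, neg_mulVec, smul_mulVec, one_mulVec, zero_mulVec,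
    mulVec_add, mulVec_sub, ← mulVec_mulVec,
    dotProduct_add, add_dotProduct, dotProduct_sub, sub_dotProduct,
    dotProduct_neg, dotProduct_smul, smul_eq_mul, dotProduct_zero, dotProduct_transpose_mulVec]
  have hQ_comm (a b : m → ℝ) : a ⬝ᵥ Q *ᵥ b = b ⬝ᵥ Q *ᵥ a := by
    rw [← dotProduct_transpose_mulVec, hQ]
  rw [dotProduct_comm (Hᵀ *ᵥ _), dotProduct_transpose_mulVec, hQ_comm (S *ᵥ w), hQ_comm (B *ᵥ u)]
  simp only [dotProduct_comm w, dotProduct_comm (Htil *ᵥ u) x, dotProduct_comm (Q *ᵥ x),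
    dotProduct_comm (H *ᵥ Htil *ᵥ u) (H *ᵥ x)]
  ring

theorem dissipation_ineq_of_hinfLMI {Q N : Matrix m m ℝ} (hQ : Qᵀ = Q) {S : Matrix m k ℝ}
    {B : Matrix m n ℝ} {H : Matrix k m ℝ} {Htil : Matrix m n ℝ} {ρ γ : ℝ}
    (hLMI : (-hinfLMI Q N S B H Htil ρ γ).PosSemidef) (x : m → ℝ) (w : k → ℝ) (u : n → ℝ)
    (hsector : ρ * (H *ᵥ (x - Htil *ᵥ u) ⬝ᵥ H *ᵥ (x - Htil *ᵥ u))
      ≤ 2 * (H *ᵥ (x - Htil *ᵥ u) ⬝ᵥ w)) :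
    (N *ᵥ x + S *ᵥ w + B *ᵥ u) ⬝ᵥ Q *ᵥ x + x ⬝ᵥ Q *ᵥ (N *ᵥ x + S *ᵥ w + B *ᵥ u)
      ≤ γ ^ 2 * (u ⬝ᵥ u) - (x - Htil *ᵥ u) ⬝ᵥ (x - Htil *ᵥ u) := by
  have hneg := hLMI.dotProduct_mulVec_nonneg (x ⊕ᵥ (w ⊕ᵥ u))
  rw [star_trivial, neg_mulVec, dotProduct_neg, dotProduct_hinfLMI_mulVec hQ] at hneg
  linarith

theorem hinf_performance_general (p l q : ℕ)
    (Q : Matrix (Fin p) (Fin p) ℝ) (hQ : Q.PosDef)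
    (N : Matrix (Fin p) (Fin p) ℝ) (S : Matrix (Fin p) (Fin l) ℝ)
    (B : Matrix (Fin p) (Fin q) ℝ) (H : Matrix (Fin l) (Fin p) ℝ)
    (Htil : Matrix (Fin p) (Fin q) ℝ) (ρ γ : ℝ)
    (ℋ : Matrix (Fin p) (Fin p) ℝ) (hℋ : ℋ = Hᵀ * H)
    (Pi11 : Matrix (Fin p) (Fin p) ℝ) (hPi11 : Pi11 = Nᵀ * Q + Q * N - ρ • ℋ + 1)
    (Pi12 : Matrix (Fin p) (Fin l) ℝ) (hPi12 : Pi12 = Q * S + Hᵀ)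
    (Pi13 : Matrix (Fin p) (Fin q) ℝ) (hPi13 : Pi13 = Q * B + ρ • (ℋ * Htil) - Htil)
    (Pi23 : Matrix (Fin l) (Fin q) ℝ) (hPi23 : Pi23 = -(H * Htil))
    (Pi33 : Matrix (Fin q) (Fin q) ℝ)
    (hPi33 : Pi33 = -(ρ • (Htilᵀ * ℋ * Htil)) + Htilᵀ * Htil
      - γ ^ 2 • (1 : Matrix (Fin q) (Fin q) ℝ))
    (Pitil : Matrix (Fin p ⊕ (Fin l ⊕ Fin q)) (Fin p ⊕ (Fin l ⊕ Fin q)) ℝ)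
    (hPitil : Pitil =
      Matrix.fromBlocks Pi11 (Matrix.fromCols Pi12 Pi13)
        (Matrix.fromRows Pi12ᵀ Pi13ᵀ) (Matrix.fromBlocks 0 Pi23 Pi23ᵀ Pi33))
    (hpsd : (-Pitil).PosSemidef)
    (v : ℝ → Fin q → ℝ) (hv : Continuous v)
    (Δg : ℝ → Fin l → ℝ)
    (e₁ : ℝ → Fin p → ℝ)
    (hdyn : ∀ t : ℝ, 0 ≤ t →
      HasDerivAt e₁ (N *ᵥ e₁ t + S *ᵥ Δg t + B *ᵥ v t) t)
    (e : ℝ → Fin p → ℝ) (he : ∀ t : ℝ, e t = e₁ t - Htil *ᵥ v t)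
    (hsector : ∀ t : ℝ, 0 ≤ t →
      2 * ((H *ᵥ e t) ⬝ᵥ Δg t) ≥ ρ * ((H *ᵥ e t) ⬝ᵥ (H *ᵥ e t))) :
    ∀ t_f : ℝ, t_f > 0 →
      ∫ t in (0 : ℝ)..t_f, e t ⬝ᵥ e t ≤
        e₁ 0 ⬝ᵥ (Q *ᵥ e₁ 0) + γ ^ 2 * ∫ t in (0 : ℝ)..t_f, v t ⬝ᵥ v t := by
  intro t_f htf
  subst hℋ hPi11 hPi12 hPi13 hPi23 hPi33 hPitil
  obtain rfl : e = fun t => e₁ t - Htil *ᵥ v t := funext he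
  have he₁ : ContinuousOn e₁ (Set.Icc 0 t_f) := fun t ht =>
    (hdyn t ht.1).continuousAt.continuousWithinAt
  rw [← intervalIntegral.integral_const_mul]
  refine integral_le_add_integral_of_hasDerivAt_le_sub htf.le
    (fun t ht => (hdyn t ht.1).dotProduct ((hdyn t ht.1).matrix_mulVec Q))
    (by simpa using hQ.posSemidef.dotProduct_mulVec_nonneg (e₁ t_f))
    (by fun_prop) (by fun_prop) fun t ht => ?_
  exact dissipation_ineq_of_hinfLMI hQ.1 hpsd _ _ _ (hsector t ht.1.le)

/-- H∞ performance of the error dynamics: if the LMI matrix `Π̃` satisfies `−Π̃ ⪰ 0`,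
then along the error dynamics `ė₁ = N e₁ + S Δg + ℬ v` with output error
`e = e₁ − H̃ v` and sector-bounded nonlinearity mismatch `Δg`, one has for every
`t_f > 0` the ℒ₂-gain bound `∫₀^{t_f} ‖e‖² ≤ ⟨e₁(0), Q e₁(0)⟩ + γ² ∫₀^{t_f} ‖v‖²`. -/
theorem hinf_performance (p l q : ℕ)
    (Q : Matrix (Fin p) (Fin p) ℝ) (hQ : Q.PosDef)
    (N : Matrix (Fin p) (Fin p) ℝ) (S : Matrix (Fin p) (Fin l) ℝ)
    (B : Matrix (Fin p) (Fin q) ℝ) (H : Matrix (Fin l) (Fin p) ℝ)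
    (Htil : Matrix (Fin p) (Fin q) ℝ) (ρ γ : ℝ) (hγ : γ > 0)
    (ℋ : Matrix (Fin p) (Fin p) ℝ) (hℋ : ℋ = Hᵀ * H)
    (Pi11 : Matrix (Fin p) (Fin p) ℝ) (hPi11 : Pi11 = Nᵀ * Q + Q * N - ρ • ℋ + 1)
    (Pi12 : Matrix (Fin p) (Fin l) ℝ) (hPi12 : Pi12 = Q * S + Hᵀ)
    (Pi13 : Matrix (Fin p) (Fin q) ℝ) (hPi13 : Pi13 = Q * B + ρ • (ℋ * Htil) - Htil)
    (Pi23 : Matrix (Fin l) (Fin q) ℝ) (hPi23 : Pi23 = -(H * Htil))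
    (Pi33 : Matrix (Fin q) (Fin q) ℝ)
    (hPi33 : Pi33 = -(ρ • (Htilᵀ * ℋ * Htil)) + Htilᵀ * Htil
      - γ ^ 2 • (1 : Matrix (Fin q) (Fin q) ℝ))
    (Pitil : Matrix (Fin p ⊕ (Fin l ⊕ Fin q)) (Fin p ⊕ (Fin l ⊕ Fin q)) ℝ)
    (hPitil : Pitil =
      Matrix.fromBlocks Pi11 (Matrix.fromCols Pi12 Pi13)
        (Matrix.fromRows Pi12ᵀ Pi13ᵀ) (Matrix.fromBlocks 0 Pi23 Pi23ᵀ Pi33))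
    (hpsd : (-Pitil).PosSemidef)
    (v : ℝ → Fin q → ℝ) (hv : Continuous v)
    (Δg : ℝ → Fin l → ℝ) (hΔg : Continuous Δg)
    (e₁ : ℝ → Fin p → ℝ)
    (hdyn : ∀ t : ℝ, 0 ≤ t →
      HasDerivAt e₁ (N *ᵥ e₁ t + S *ᵥ Δg t + B *ᵥ v t) t)
    (e : ℝ → Fin p → ℝ) (he : ∀ t : ℝ, e t = e₁ t - Htil *ᵥ v t)
    (hsector : ∀ t : ℝ, 0 ≤ t →
      2 * ((H *ᵥ e t) ⬝ᵥ Δg t) ≥ ρ * ((H *ᵥ e t) ⬝ᵥ (H *ᵥ e t))) :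
    ∀ t_f : ℝ, t_f > 0 →
      ∫ t in (0 : ℝ)..t_f, e t ⬝ᵥ e t ≤
        e₁ 0 ⬝ᵥ (Q *ᵥ e₁ 0) + γ ^ 2 * ∫ t in (0 : ℝ)..t_f, v t ⬝ᵥ v t :=
  hinf_performance_general p l q Q hQ N S B H Htil ρ γ ℋ hℋ Pi11 hPi11 Pi12 hPi12 Pi13 hPi13 Pi23
    hPi23 Pi33 hPi33 Pitil hPitil hpsd v hv Δg e₁ hdyn e he hsector
end
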